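/- arXiv:1201.6529 — 4 statements merged into one kernel-verified Lean document; each statement's English description precedes it below -/
import Mathlib

section
/- In the Depth First Search exploration of a graph G, at every step of the algorithm there are no edges of G between the current set S of fully explored vertices and the current set T of unvisited vertices. -/
open Filter

/-- One step of the Depth First Search exploration of a graph `G`.  A state is a pair
`(S, U)` where `S` is the set of fully explored vertices and `U` is the stack of
vertices currently being explored (head = top of stack); the unvisited set is
`T = V ∖ (S ∪ U)`. -/
inductive DFSStep {V : Type*} [DecidableEq V] (G : SimpleGraph V) :
    Finset V × List V → Finset V × List V → Prop
  /-- The top vertex `v` of the stack has a neighbor `u` in `T`: push `u`. -/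
  | push (S : Finset V) (v : V) (U : List V) (u : V) (hadj : G.Adj v u)
      (hS : u ∉ S) (hU : u ∉ v :: U) : DFSStep G (S, v :: U) (S, u :: v :: U)
  /-- The top vertex `v` has no neighbor in `T`: pop `v` into `S`. -/
  | pop (S : Finset V) (v : V) (U : List V)
      (h : ∀ u : V, u ∉ S → u ∉ v :: U → ¬ G.Adj v u) :
      DFSStep G (S, v :: U) (insert v S, U)
  /-- The stack is empty: push an arbitrary unvisited vertex. -/
  | start (S : Finset V) (u : V) (hS : u ∉ S) : DFSStep G (S, []) (S, [u])

/-- The states reachable by the DFS exploration of `G` from the initial state. -/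
def DFSReachable {V : Type*} [DecidableEq V] (G : SimpleGraph V)
    (st : Finset V × List V) : Prop :=
  Relation.ReflTransGen (DFSStep G) (∅, ([] : List V)) st

def NoExploredUnvisitedEdge {V : Type*} (G : SimpleGraph V) (st : Finset V × List V) : Prop :=
  ∀ s ∈ st.1, ∀ t : V, t ∉ st.1 → t ∉ st.2 → ¬ G.Adj s t

/-- Push and start only shrink the unvisited set without touching `S`; pop adds to `S` a vertex
whose neighbours were all checked to be visited. -/
lemma DFSStep.noExploredUnvisitedEdge {V : Type*} [DecidableEq V] {G : SimpleGraph V}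
    {st st' : Finset V × List V} (hstep : DFSStep G st st') (hst : NoExploredUnvisitedEdge G st) :
    NoExploredUnvisitedEdge G st' := by
  intro s hs t ht htU
  cases hstep with
  | push S v U u _ _ _ => exact hst s hs t ht (List.not_mem_of_not_mem_cons htU)
  | start S u _ => exact hst s hs t ht List.not_mem_nil
  | pop S v U hpop =>
    obtain ⟨htv, htS⟩ : t ≠ v ∧ t ∉ S := by simpa only [Finset.mem_insert, not_or] using ht
    have htvU : t ∉ v :: U := by simp [htv, htU]
    rcases Finset.mem_insert.mp hs with rfl | hs
    · exact hpop t htS htvU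
    · exact hst s hs t htS htvU

/-- At every step of the DFS exploration, there are no edges of `G` between the set
`S` of fully explored vertices and the set `T` of unvisited vertices. -/
theorem stmt_8 {V : Type*} [DecidableEq V] (G : SimpleGraph V)
    (st : Finset V × List V) (h : DFSReachable G st) :
    ∀ s ∈ st.1, ∀ t : V, t ∉ st.1 → t ∉ st.2 → ¬ G.Adj s t := by
  induction h with
  | refl => simp
  | tail _ hstep ih => exact hstep.noExploredUnvisitedEdge ih
end

section
/- Run DFS on a graph determined by a sequence X_1, X_2, ..., X_N ∈ {0,1} answering the algorithm's edge queries in order (X_i = 1 meaning the i-th queried pair is an edge). Then after t queries, as long as the set T of unvisited vertices is nonempty, |S ∪ U| ≥ ∑_{i=1}^t X_i, and at any time |U| ≤ 1 + ∑_{i=1}^t X_i. -/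
/-!
Both bounds are invariants of a single DFS step. The discovered set `S ∪ U` never shrinks and
gains a fresh vertex at every positive answer, so its size minus the number of positive answers
never decreases. The stack `U` grows only at a positive answer, or from empty to a singleton
when a new component is started, so `|U| ≤ 1 + ∑ X_i` is preserved.
-/

/-- One step of a DFS exploration guided by a sequence `X` of query answers.
A state is `(S, U, t)`: explored set, stack, and the number of queries made so far.
The `i`-th query is answered positively iff `X i = true`; while the unvisited set
is nonempty, a positive answer moves a vertex from `T` to the stack `U`. -/
inductive DFSQStep {V : Type*} [DecidableEq V] (X : ℕ → Bool) :
    Finset V × List V × ℕ → Finset V × List V × ℕ → Prop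
  /-- A positively answered query reveals a new vertex `u`, pushed onto the stack. -/
  | pos (S : Finset V) (v : V) (U : List V) (u : V) (t : ℕ) (hX : X t = true)
      (hS : u ∉ S) (hU : u ∉ v :: U) :
      DFSQStep X (S, v :: U, t) (S, u :: v :: U, t + 1)
  /-- A negatively answered query changes nothing but the query count. -/
  | neg (S : Finset V) (v : V) (U : List V) (t : ℕ) (hX : X t = false) :
      DFSQStep X (S, v :: U, t) (S, v :: U, t + 1)
  /-- The top of the stack is popped into `S` (no query is made). -/
  | pop (S : Finset V) (v : V) (U : List V) (t : ℕ) :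
      DFSQStep X (S, v :: U, t) (insert v S, U, t)
  /-- The stack is empty: an unvisited vertex is pushed "for free". -/
  | start (S : Finset V) (u : V) (t : ℕ) (hS : u ∉ S) :
      DFSQStep X (S, [], t) (S, [u], t)

/-- States reachable by the query-guided DFS from the initial state (no queries made). -/
def DFSQReachable {V : Type*} [DecidableEq V] (X : ℕ → Bool)
    (st : Finset V × List V × ℕ) : Prop :=
  Relation.ReflTransGen (DFSQStep X) (∅, ([] : List V), 0) st

open Finset

def numPositive (X : ℕ → Bool) (t : ℕ) : ℕ :=
  ∑ i ∈ range t, if X i = true then 1 else 0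

@[simp]
lemma numPositive_zero (X : ℕ → Bool) : numPositive X 0 = 0 := rfl

lemma numPositive_succ (X : ℕ → Bool) (t : ℕ) :
    numPositive X (t + 1) = numPositive X t + if X t = true then 1 else 0 :=
  sum_range_succ _ t

def dfsqDiscovered {V : Type*} [DecidableEq V] (st : Finset V × List V × ℕ) : Finset V :=
  st.1 ∪ st.2.1.toFinset

namespace DFSQStep

variable {V : Type*} [DecidableEq V] {X : ℕ → Bool} {st st' : Finset V × List V × ℕ}

lemma card_discovered_add_numPositive_le (hs : DFSQStep X st st') :
    (dfsqDiscovered st).card + numPositive X st'.2.2 ≤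
      (dfsqDiscovered st').card + numPositive X st.2.2 := by
  cases hs with
  | pos S v U u t hX hS hU =>
    have hnew : u ∉ S ∪ (v :: U).toFinset := by simp_all
    simp only [dfsqDiscovered, numPositive_succ, hX, if_true, List.toFinset_cons (a := u),
      union_insert, card_insert_of_notMem hnew]
    omega
  | neg S v U t hX => simp [dfsqDiscovered, numPositive_succ, hX]
  | pop S v U t =>
    have hsame : insert v S ∪ U.toFinset = S ∪ (v :: U).toFinset := by
      rw [List.toFinset_cons, union_insert, insert_union]
    simp [dfsqDiscovered, hsame]
  | start S u t hS =>
    simpa [dfsqDiscovered] using card_le_card (subset_union_left (s₂ := {u}))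

lemma length_le_one_add_numPositive (hs : DFSQStep X st st')
    (h : st.2.1.length ≤ 1 + numPositive X st.2.2) :
    st'.2.1.length ≤ 1 + numPositive X st'.2.2 := by
  cases hs with
  | pos S v U u t hX =>
    simp only [List.length_cons, numPositive_succ, hX, if_true] at h ⊢
    omega
  | neg S v U t hX => simpa [numPositive_succ, hX] using h
  | pop S v U t =>
    simp only [List.length_cons] at h ⊢
    omega
  | start S u t hS => simp

end DFSQStep

namespace DFSQReachable

variable {V : Type*} [DecidableEq V] {X : ℕ → Bool} {st : Finset V × List V × ℕ}

lemma numPositive_le_card_discovered (h : DFSQReachable X st) :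
    numPositive X st.2.2 ≤ (dfsqDiscovered st).card := by
  induction h with
  | refl => simp
  | tail _ hs ih => have := hs.card_discovered_add_numPositive_le; omega

lemma length_le_one_add_numPositive (h : DFSQReachable X st) :
    st.2.1.length ≤ 1 + numPositive X st.2.2 := by
  induction h with
  | refl => simp
  | tail _ hs ih => exact hs.length_le_one_add_numPositive ih

end DFSQReachable

/-- In a DFS guided by query answers `X`, after `t` queries: as long as the unvisited
set `T` is nonempty we have `|S ∪ U| ≥ ∑_{i<t} X_i`, and always `|U| ≤ 1 + ∑_{i<t} X_i`. -/
theorem stmt_9 {V : Type*} [DecidableEq V] (X : ℕ → Bool)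
    (S : Finset V) (U : List V) (t : ℕ) (h : DFSQReachable X (S, U, t)) :
    ((∃ w : V, w ∉ S ∧ w ∉ U) →
      (∑ i ∈ Finset.range t, (if X i = true then 1 else 0)) ≤ (S ∪ U.toFinset).card) ∧
    U.length ≤ 1 + ∑ i ∈ Finset.range t, (if X i = true then 1 else 0) :=
  ⟨fun _ => h.numPositive_le_card_discovered, h.length_le_one_add_numPositive⟩
end

section
/- Let G be a graph on n vertices such that for every pair of disjoint vertex subsets A, B of size k each, there is at least one edge of G between A and B. Then G contains a path with n − 2k + 2 vertices (i.e., of length n − 2k + 1). -/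
/-! Run depth-first search, keeping the vertices in three classes: `finished` ones (all of whose
neighbours have been visited), `unvisited` ones, and the current `stack`, which is a path.
There is never an edge between a finished and an unvisited vertex, and every step of the search
either finishes a vertex or visits a new one, so `#unvisited - #finished` drops by exactly one
per step and at some moment the two classes have equal size. If that size were at least `k`, the
hypothesis would give an edge between them; hence both have fewer than `k` vertices, and the
stack holds at least `n - 2k + 2` vertices. -/

namespace SimpleGraph

variable {V : Type*} (G : SimpleGraph V)

structure DFSState where
  finished : Finset V
  unvisited : Finset V
  stack : List V
  isChain_stack : stack.IsChain G.Adj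
  nodup_stack : stack.Nodup
  notMem_finished_of_mem_stack : ∀ x ∈ stack, x ∉ finished
  notMem_unvisited_of_mem_stack : ∀ x ∈ stack, x ∉ unvisited
  disjoint : Disjoint finished unvisited
  not_adj : ∀ s ∈ finished, ∀ t ∈ unvisited, ¬ G.Adj s t
  mem_or : ∀ x, x ∈ finished ∨ x ∈ unvisited ∨ x ∈ stack

namespace DFSState

variable {G}

def init [Fintype V] : DFSState G where
  finished := ∅
  unvisited := Finset.univ
  stack := []
  isChain_stack := .nil
  nodup_stack := List.nodup_nil
  notMem_finished_of_mem_stack := by simp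
  notMem_unvisited_of_mem_stack := by simp
  disjoint := Finset.disjoint_empty_left _
  not_adj := by simp
  mem_or := by simp

variable [DecidableEq V]

def push (s : DFSState G) {x : V} (hx : x ∈ s.unvisited)
    (hadj : ∀ y ∈ s.stack.head?, G.Adj x y) : DFSState G where
  finished := s.finished
  unvisited := s.unvisited.erase x
  stack := x :: s.stack
  isChain_stack := s.isChain_stack.cons hadj
  nodup_stack := List.nodup_cons.2 ⟨fun h => s.notMem_unvisited_of_mem_stack x h hx, s.nodup_stack⟩
  notMem_finished_of_mem_stack := by
    rintro y (_ | ⟨_, hy⟩)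
    · exact Finset.disjoint_right.1 s.disjoint hx
    · exact s.notMem_finished_of_mem_stack y hy
  notMem_unvisited_of_mem_stack := by
    rintro y (_ | ⟨_, hy⟩)
    · exact Finset.notMem_erase _ _
    · exact fun h => s.notMem_unvisited_of_mem_stack y hy (Finset.mem_of_mem_erase h)
  disjoint := s.disjoint.mono_right (Finset.erase_subset _ _)
  not_adj a ha b hb := s.not_adj a ha b (Finset.mem_of_mem_erase hb)
  mem_or y := by
    by_cases hyx : y = x
    · simp [hyx]
    · simpa [hyx] using s.mem_or y

def pop (s : DFSState G) {v : V} {rest : List V} (hs : s.stack = v :: rest)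
    (hv : ∀ t ∈ s.unvisited, ¬ G.Adj v t) : DFSState G where
  finished := insert v s.finished
  unvisited := s.unvisited
  stack := rest
  isChain_stack := by simpa [hs] using s.isChain_stack.tail
  nodup_stack := (List.nodup_cons.1 (hs ▸ s.nodup_stack)).2
  notMem_finished_of_mem_stack y hy := by
    have hyv : y ≠ v := by
      rintro rfl
      exact (List.nodup_cons.1 (hs ▸ s.nodup_stack)).1 hy
    simpa [hyv] using s.notMem_finished_of_mem_stack y (by simp [hs, hy])
  notMem_unvisited_of_mem_stack y hy := s.notMem_unvisited_of_mem_stack y (by simp [hs, hy])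
  disjoint := Finset.disjoint_insert_left.2
    ⟨s.notMem_unvisited_of_mem_stack v (by simp [hs]), s.disjoint⟩
  not_adj a ha b hb := by
    rcases Finset.mem_insert.1 ha with rfl | ha
    · exact hv b hb
    · exact s.not_adj a ha b hb
  mem_or y := by
    by_cases hyv : y = v
    · simp [hyv]
    · simpa [hs, hyv] using s.mem_or y

theorem card_finished_pop (s : DFSState G) {v : V} {rest : List V} (hs : s.stack = v :: rest)
    (hv : ∀ t ∈ s.unvisited, ¬ G.Adj v t) :
    (s.pop hs hv).finished.card = s.finished.card + 1 :=
  Finset.card_insert_of_notMem (s.notMem_finished_of_mem_stack v (by simp [hs]))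

theorem card_unvisited_push (s : DFSState G) {x : V} (hx : x ∈ s.unvisited)
    (hadj : ∀ y ∈ s.stack.head?, G.Adj x y) :
    (s.push hx hadj).unvisited.card + 1 = s.unvisited.card :=
  Finset.card_erase_add_one hx

theorem exists_step (s : DFSState G) (hlt : s.finished.card < s.unvisited.card) :
    ∃ s' : DFSState G,
      s'.finished.card + s.unvisited.card = s.finished.card + s'.unvisited.card + 1 := by
  have push_step {x : V} (hx : x ∈ s.unvisited) (hadj : ∀ y ∈ s.stack.head?, G.Adj x y) :
      ∃ s' : DFSState G,
        s'.finished.card + s.unvisited.card = s.finished.card + s'.unvisited.card + 1 :=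
    ⟨s.push hx hadj, by rw [← s.card_unvisited_push hx hadj]; rfl⟩
  match hs : s.stack with
  | [] =>
    obtain ⟨x, hx⟩ := Finset.card_pos.1 (Nat.zero_lt_of_lt hlt)
    exact push_step hx (by simp [hs])
  | v :: rest =>
    by_cases hnbr : ∃ x ∈ s.unvisited, G.Adj x v
    · obtain ⟨x, hx, hxv⟩ := hnbr
      exact push_step hx (by simpa [hs] using hxv)
    · have hv : ∀ t ∈ s.unvisited, ¬ G.Adj v t := fun t ht h => hnbr ⟨t, ht, h.symm⟩
      exact ⟨s.pop hs hv, by rw [s.card_finished_pop hs hv, Nat.add_right_comm]; rfl⟩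

theorem exists_card_finished_eq_card_unvisited_of_le (s : DFSState G)
    (hle : s.finished.card ≤ s.unvisited.card) :
    ∃ s' : DFSState G, s'.finished.card = s'.unvisited.card := by
  obtain ⟨d, hd⟩ := Nat.exists_eq_add_of_le hle
  induction d generalizing s with
  | zero => exact ⟨s, hd.symm⟩
  | succ d ih =>
    obtain ⟨s', hs'⟩ := s.exists_step (by omega)
    exact ih s' (by omega) (by omega)

variable [Fintype V]

theorem exists_card_finished_eq_card_unvisited :
    ∃ s : DFSState G, s.finished.card = s.unvisited.card :=
  init.exists_card_finished_eq_card_unvisited_of_le (by simp [init])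

theorem card_le_card_add_card_add_length (s : DFSState G) :
    Fintype.card V ≤ s.finished.card + s.unvisited.card + s.stack.length := by
  have hcover : Finset.univ ⊆ s.finished ∪ s.unvisited ∪ s.stack.toFinset := fun x _ => by
    simpa [or_assoc] using s.mem_or x
  calc Fintype.card V
      ≤ (s.finished ∪ s.unvisited ∪ s.stack.toFinset).card := Finset.card_le_card hcover
    _ ≤ s.finished.card + s.unvisited.card + s.stack.toFinset.card :=
        (Finset.card_union_le _ _).trans (by gcongr; exact Finset.card_union_le _ _)
    _ ≤ _ := by gcongr; exact List.toFinset_card_le _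

end DFSState

end SimpleGraph

theorem stmt_15_general {V : Type*} [Fintype V] [DecidableEq V] (G : SimpleGraph V)
    (n k : ℕ) (hn : Fintype.card V = n) (h2k : 2 * k ≤ n)
    (h : ∀ A B : Finset V, A.card = k → B.card = k → Disjoint A B →
      ∃ a ∈ A, ∃ b ∈ B, G.Adj a b) :
    ∃ u v : V, ∃ w : G.Walk u v, w.IsPath ∧ n - 2 * k + 1 ≤ w.length := by
  obtain ⟨s, hbal⟩ := SimpleGraph.DFSState.exists_card_finished_eq_card_unvisited (G := G)
  have hfin : s.finished.card < k := by
    by_contra! hks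
    obtain ⟨A, hA, hAk⟩ := Finset.exists_subset_card_eq hks
    obtain ⟨B, hB, hBk⟩ := Finset.exists_subset_card_eq (hbal ▸ hks)
    obtain ⟨a, ha, b, hb, hab⟩ := h A B hAk hBk (s.disjoint.mono hA hB)
    exact s.not_adj a (hA ha) b (hB hb) hab
  have hcard := s.card_le_card_add_card_add_length
  have hne : s.stack ≠ [] := fun hnil => by simp only [hnil, List.length_nil] at hcard; omega
  refine ⟨_, _, SimpleGraph.Walk.ofSupport s.stack hne s.isChain_stack,
    SimpleGraph.Walk.IsPath.mk' (by simpa using s.nodup_stack), ?_⟩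
  rw [SimpleGraph.Walk.length_ofSupport]
  omega

/-- If `G` is a graph on `n` vertices such that between every two disjoint vertex
subsets of size `k` there is an edge, then `G` contains a path with `n - 2k + 2`
vertices, i.e. of length `n - 2k + 1`. -/
theorem stmt_15 {V : Type*} [Fintype V] [DecidableEq V] (G : SimpleGraph V)
    (n k : ℕ) (hn : Fintype.card V = n) (hk : 0 < k) (h2k : 2 * k ≤ n)
    (h : ∀ A B : Finset V, A.card = k → B.card = k → Disjoint A B →
      ∃ a ∈ A, ∃ b ∈ B, G.Adj a b) :
    ∃ u v : V, ∃ w : G.Walk u v, w.IsPath ∧ n - 2 * k + 1 ≤ w.length :=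
  stmt_15_general G n k hn h2k h
end

section
/- Suppose during a DFS exploration of a graph on n vertices, guided by query answers X_1, X_2, ..., the set S of explored vertices reaches size n/3 at some time t while |U| ≤ 1 + ∑_{i=1}^t X_i < n/3. Then the algorithm must have already made at least |S|·|T| ≥ n²/9 queries by time t, i.e., t ≥ n²/9. -/
/-- One step of a DFS exploration, recording the set `Q` of queried (ordered) pairs.
A state is `(S, U, Q)`: explored set, stack, queried pairs; the number of queries
made so far is `Q.card`. -/
inductive DFSPStep (V : Type*) [DecidableEq V] :
    Finset V × List V × Finset (V × V) → Finset V × List V × Finset (V × V) → Prop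
  /-- A positively answered query: the new vertex `u` is pushed onto the stack. -/
  | pos (S : Finset V) (v : V) (U : List V) (u : V) (Q : Finset (V × V))
      (hQ : (v, u) ∉ Q) (hS : u ∉ S) (hU : u ∉ v :: U) :
      DFSPStep V (S, v :: U, Q) (S, u :: v :: U, insert (v, u) Q)
  /-- A negatively answered query: only `Q` grows. -/
  | neg (S : Finset V) (v : V) (U : List V) (u : V) (Q : Finset (V × V))
      (hQ : (v, u) ∉ Q) (hS : u ∉ S) (hU : u ∉ v :: U) :
      DFSPStep V (S, v :: U, Q) (S, v :: U, insert (v, u) Q)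
  /-- The top vertex `v` is popped into `S`, once all pairs with unvisited vertices
  have been queried. -/
  | pop (S : Finset V) (v : V) (U : List V) (Q : Finset (V × V))
      (h : ∀ u : V, u ∉ S → u ∉ v :: U → (v, u) ∈ Q) :
      DFSPStep V (S, v :: U, Q) (insert v S, U, Q)
  /-- The stack is empty: an unvisited vertex is pushed "for free". -/
  | start (S : Finset V) (u : V) (Q : Finset (V × V)) (hS : u ∉ S) :
      DFSPStep V (S, [], Q) (S, [u], Q)

/-- Reachable states of the query-recording DFS. -/
def DFSPReachable (V : Type*) [DecidableEq V] (st : Finset V × List V × Finset (V × V)) :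
    Prop :=
  Relation.ReflTransGen (DFSPStep V) (∅, ([] : List V), (∅ : Finset (V × V))) st

/-!
Every vertex is popped into `S` only after all its pairs with vertices outside `S ∪ U` have
been queried, and `S ∪ U` only grows afterwards, so `S ×ˢ (S ∪ U)ᶜ ⊆ Q`. If `|S| = n/3` and
`|U| < n/3`, the complement has more than `n/3` vertices, giving at least `n²/9` queries.
-/

namespace DFSPReachable

variable {V : Type*} [DecidableEq V]

theorem mem_of_mem_explored_of_unvisited {st : Finset V × List V × Finset (V × V)}
    (h : DFSPReachable V st) : ∀ v ∈ st.1, ∀ u ∉ st.1, u ∉ st.2.1 → (v, u) ∈ st.2.2 := by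
  induction h with
  | refl => simp
  | tail _ hstep ih =>
    cases hstep with
    | pos =>
      intro w hw x hxS hxU
      exact Finset.mem_insert_of_mem (ih w hw x hxS (List.not_mem_of_not_mem_cons hxU))
    | neg =>
      intro w hw x hxS hxU
      exact Finset.mem_insert_of_mem (ih w hw x hxS hxU)
    | pop S v U Q hall =>
      intro w hw x hxS hxU
      rw [Finset.mem_insert, not_or] at hxS
      have hx : x ∉ v :: U := by simp [hxS.1, hxU]
      rcases Finset.mem_insert.mp hw with rfl | hw
      · exact hall x hxS.2 hx
      · exact ih w hw x hxS.2 hx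
    | start =>
      intro w hw x hxS _
      exact ih w hw x hxS List.not_mem_nil

theorem product_compl_subset_queries [Fintype V] {S : Finset V} {U : List V}
    {Q : Finset (V × V)} (h : DFSPReachable V (S, U, Q)) : S ×ˢ (S ∪ U.toFinset)ᶜ ⊆ Q := by
  intro ⟨v, u⟩ hvu
  simp only [Finset.mem_product, Finset.mem_compl, Finset.mem_union, List.mem_toFinset,
    not_or] at hvu
  exact h.mem_of_mem_explored_of_unvisited v hvu.1 u hvu.2.1 hvu.2.2

theorem card_mul_card_compl_le [Fintype V] {S : Finset V} {U : List V}
    {Q : Finset (V × V)} (h : DFSPReachable V (S, U, Q)) :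
    S.card * ((S ∪ U.toFinset)ᶜ).card ≤ Q.card :=
  Finset.card_product S _ ▸ Finset.card_le_card h.product_compl_subset_queries

end DFSPReachable

theorem Finset.card_le_card_add_length_add_card_compl {V : Type*} [Fintype V] [DecidableEq V]
    (S : Finset V) (U : List V) :
    Fintype.card V ≤ S.card + U.length + ((S ∪ U.toFinset)ᶜ).card := by
  rw [← Finset.card_add_card_compl (S ∪ U.toFinset)]
  gcongr
  exact (Finset.card_union_le _ _).trans (by gcongr; exact U.toFinset_card_le)

/-- If during a DFS exploration of a graph on `n` vertices the explored set `S` reaches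
size `n/3` while the stack `U` has fewer than `n/3` vertices, then all `|S|·|T| ≥ n²/9`
pairs between `S` and `T` have been queried, so at least `n²/9` queries have been made. -/
theorem stmt_16 {n : ℕ} (S : Finset (Fin n)) (U : List (Fin n)) (Q : Finset (Fin n × Fin n))
    (h : DFSPReachable (Fin n) (S, U, Q))
    (hS : (S.card : ℝ) = n / 3) (hU : (U.length : ℝ) < n / 3) :
    S.card * ((S ∪ U.toFinset)ᶜ).card ≤ Q.card ∧ (n : ℝ) ^ 2 / 9 ≤ (Q.card : ℝ) := by
  have hQ := h.card_mul_card_compl_le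
  refine ⟨hQ, ?_⟩
  have hcount : (n : ℝ) ≤ S.card + U.length + ((S ∪ U.toFinset)ᶜ).card := by
    exact_mod_cast Fintype.card_fin n ▸ S.card_le_card_add_length_add_card_compl U
  have hT : (n : ℝ) / 3 ≤ ((S ∪ U.toFinset)ᶜ).card := by linarith
  calc (n : ℝ) ^ 2 / 9 = n / 3 * (n / 3) := by ring
    _ ≤ S.card * ((S ∪ U.toFinset)ᶜ).card := by rw [hS]; gcongr
    _ ≤ Q.card := by exact_mod_cast hQ
end
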